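/- Let H be a group with trivial center and admitting no surjective group homomorphism onto ℤ, and let φ be an automorphism of H. Let Out⁰(H_φ) denote the set of elements of Out(H_φ) that admit a representative ψ ∈ Aut(H_φ) with ψ(ι(H)) = ι(H) and ψ(t) ∈ ι(H)·t. Then Out⁰(H_φ) is a subgroup of Out(H_φ); if the class of φ is conjugate in Out(H) to the class of φ⁻¹, then Out⁰(H_φ) has index two in Out(H_φ), and otherwise Out⁰(H_φ) = Out(H_φ). -/

import Mathlib

/-- The mapping torus `H ⋊_φ ℤ` of an automorphism `φ` of `H`: the semidirect
product in which the generator `t` of the `ℤ`-factor acts by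
`t · ι(h) · t⁻¹ = ι(φ(h))`. -/
abbrev MappingTorus (H : Type*) [Group H] (φ : MulAut H) : Type _ :=
  H ⋊[zpowersHom (MulAut H) φ] Multiplicative ℤ

/-- The canonical inclusion `ι : H → H ⋊_φ ℤ`. -/
abbrev MappingTorus.ι {H : Type*} [Group H] (φ : MulAut H) : H →* MappingTorus H φ :=
  SemidirectProduct.inl

/-- The canonical generator `t` of the `ℤ`-factor of `H ⋊_φ ℤ`. -/
abbrev MappingTorus.t {H : Type*} [Group H] (φ : MulAut H) : MappingTorus H φ :=
  SemidirectProduct.inr (Multiplicative.ofAdd 1)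

instance innRangeNormal (G : Type*) [Group G] :
    ((MulAut.conj : G →* MulAut G).range).Normal := by
  constructor
  rintro _ ⟨x, rfl⟩ g
  refine ⟨g x, ?_⟩
  ext h
  simp [MulAut.conj_apply, MulAut.mul_apply, map_mul, map_inv, mul_assoc]

/-- The outer automorphism group: automorphisms modulo inner automorphisms. -/
abbrev Out (G : Type*) [Group G] :=
  MulAut G ⧸ (MulAut.conj : G →* MulAut G).range

/-!
An automorphism `ψ` of `H ⋊_φ ℤ` maps `ι(H)` into the kernel of the projection to `ℤ`, since `H`
has no nontrivial homomorphism to `ℤ`; hence `ι(H)` is characteristic and `ψ` induces `±1` on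
the quotient `ℤ`. This degree is a homomorphism `Out(H ⋊_φ ℤ) → ℤˣ` whose kernel is `Out⁰`.
An automorphism of degree `-1` restricts to some `α ∈ Aut(H)` and sends `t` to `ι(k) t⁻¹`;
comparing both sides of `t ι(x) t⁻¹ = ι(φ x)` gives `α φ α⁻¹ = conj k ∘ φ⁻¹`. Conversely, such
`α` and `k` define an automorphism `ι(x) ↦ ι(α x)`, `t ↦ ι(k) t⁻¹`. So the degree is onto `ℤˣ`
exactly when `[φ]` is conjugate to `[φ]⁻¹`.
-/

open Multiplicative Subgroup SemidirectProduct

theorem MonoidHom.eq_one_of_forall_not_surjective {H : Type*} [Group H]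
    (hH : ∀ f : H →* Multiplicative ℤ, ¬ Function.Surjective f) (f : H →* Multiplicative ℤ) :
    f = 1 := by
  by_contra hf
  obtain ⟨h, hh⟩ : ∃ h, f h ≠ 1 := by
    by_contra! h
    exact hf (MonoidHom.ext h)
  have : Infinite f.range := Set.infinite_coe_iff.mpr <|
    (infinite_zpowers.mpr (not_isOfFinOrder_of_isMulTorsionFree hh)).mono
      (zpowers_le.mpr ⟨h, rfl⟩)
  exact hH (intCyclicMulEquiv.symm.toMonoidHom.comp f.rangeRestrict)
    (intCyclicMulEquiv.symm.surjective.comp f.rangeRestrict_surjective)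

theorem MonoidHom.apply_zpow_apply_eq_conj {N G : Type*} [Group N] [Group G] (f : N →* G)
    {a : MulAut N} {u : G} (h : ∀ x, f (a x) = u * f x * u⁻¹) (n : ℤ) (x : N) :
    f ((a ^ n) x) = u ^ n * f x * (u ^ n)⁻¹ := by
  induction n using Int.induction_on generalizing x with
  | zero => simp
  | succ n ih => rw [zpow_add_one, MulAut.mul_apply, ih, h]; group
  | pred n ih =>
    have h' : f (a⁻¹ x) = u⁻¹ * f x * u := by
      have := h (a⁻¹ x)
      rw [MulAut.apply_inv_self] at this
      rw [this]; group
    rw [zpow_sub_one, MulAut.mul_apply, ih, h']; group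

theorem MulAut.exists_apply_eq_of_map_range_eq {H G : Type*} [Group H] [Group G] {ι : H →* G}
    (hι : Function.Injective ι) (ψ : MulAut G) (h : ι.range.map ψ.toMonoidHom = ι.range) :
    ∃ α : MulAut H, ∀ x, ψ (ι x) = ι (α x) := by
  replace h : ι.range.map (ψ : G →* G) = ι.range := h
  exact ⟨(MonoidHom.ofInjective hι).trans <| (ψ.subgroupMap ι.range).trans <|
    (MulEquiv.subgroupCongr h).trans (MonoidHom.ofInjective hι).symm, fun x => by
    simp [MonoidHom.apply_ofInjective_symm, MonoidHom.ofInjective_apply]⟩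

theorem Out.isConj_mk_iff {G : Type*} [Group G] {a b : MulAut G} :
    IsConj (QuotientGroup.mk a : Out G) (QuotientGroup.mk b) ↔
      ∃ c : MulAut G, ∃ k : G, c * a = MulAut.conj k * b * c := by
  rw [isConj_iff]
  constructor
  · rintro ⟨c, hc⟩
    obtain ⟨c, rfl⟩ := QuotientGroup.mk_surjective c
    rw [← QuotientGroup.mk_inv, ← QuotientGroup.mk_mul, ← QuotientGroup.mk_mul,
      QuotientGroup.eq_iff_div_mem] at hc
    obtain ⟨k, hk⟩ := hc
    exact ⟨c, k, by rw [hk, div_mul_cancel]; group⟩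
  · rintro ⟨c, k, h⟩
    refine ⟨c, ?_⟩
    rw [← QuotientGroup.mk_inv, ← QuotientGroup.mk_mul, ← QuotientGroup.mk_mul,
      QuotientGroup.eq_iff_div_mem]
    exact ⟨k, by rw [h, mul_inv_cancel_right, mul_div_cancel_right]⟩

namespace SemidirectProduct

variable {N G : Type*} [Group N] [Group G] {φ : G →* MulAut N}

theorem rightHom_eq_rightHom_iff {x y : N ⋊[φ] G} :
    rightHom x = rightHom y ↔ ∃ n, x = inl n * y := by
  rw [← div_eq_one, ← map_div, ← MonoidHom.mem_ker, ← range_inl_eq_ker_rightHom]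
  exact exists_congr fun n => by rw [eq_comm, div_eq_iff_eq_mul]

theorem bijective_of_map_inl_of_rightHom_map (F : N ⋊[φ] G →* N ⋊[φ] G) (α : N ≃* N)
    (β : G ≃* G) (hl : ∀ n, F (inl n) = inl (α n)) (hr : ∀ x, rightHom (F x) = β (rightHom x)) :
    Function.Bijective F := by
  refine ⟨(injective_iff_map_eq_one F).mpr fun x hx => ?_, fun y => ?_⟩
  · have hx1 : x ∈ (inl : N →* N ⋊[φ] G).range := by
      rw [range_inl_eq_ker_rightHom, MonoidHom.mem_ker]
      exact β.injective (by rw [← hr, hx, map_one, map_one])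
    obtain ⟨n, rfl⟩ := hx1
    rw [hl, map_eq_one_iff (inl : N →* N ⋊[φ] G) inl_injective, MulEquiv.map_eq_one_iff] at hx
    rw [hx, map_one]
  · set x : N ⋊[φ] G := inr (β.symm (rightHom y))
    obtain ⟨n, hn⟩ := rightHom_eq_rightHom_iff.mp <|
      show rightHom y = rightHom (F x) by rw [hr, rightHom_inr, β.apply_symm_apply]
    exact ⟨inl (α.symm n) * x, by rw [map_mul, hl, α.apply_symm_apply, hn]⟩

end SemidirectProduct

namespace MappingTorus

variable {H : Type*} [Group H] {φ : MulAut H}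

variable (φ) in
theorem ι_injective : Function.Injective (ι φ) := inl_injective

theorem inr_ofAdd (n : ℤ) : (inr (ofAdd n) : MappingTorus H φ) = t φ ^ n := by
  rw [← map_zpow, ← ofAdd_zsmul, smul_eq_mul, mul_one]

theorem rightHom_zpow_t (n : ℤ) : rightHom (t φ ^ n) = ofAdd n := by
  rw [← inr_ofAdd, rightHom_inr]

theorem t_mul_ι_mul_t_inv (x : H) : t φ * ι φ x * (t φ)⁻¹ = ι φ (φ x) := by
  rw [← map_inv, ← inl_aut]
  simp

theorem t_inv_mul_ι_mul_t (x : H) : (t φ)⁻¹ * ι φ x * t φ = ι φ (φ⁻¹ x) := by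
  rw [← map_inv, ← inl_aut_inv]
  simp

theorem hom_ext {G : Type*} [Group G] {f g : MappingTorus H φ →* G}
    (hι : f.comp (ι φ) = g.comp (ι φ)) (ht : f (t φ) = g (t φ)) : f = g :=
  SemidirectProduct.hom_ext hι (MonoidHom.ext_mint ht)

def degree (ψ : MulAut (MappingTorus H φ)) : ℤ := toAdd (rightHom (ψ (t φ)))

theorem degree_eq_iff (ψ : MulAut (MappingTorus H φ)) (n : ℤ) :
    degree ψ = n ↔ ∃ g, ψ (t φ) = ι φ g * t φ ^ n := by
  rw [← rightHom_eq_rightHom_iff, rightHom_zpow_t, degree]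
  exact toAdd.eq_symm_apply.symm

theorem degree_conj (g : MappingTorus H φ) : degree (MulAut.conj g) = 1 := by
  simp [degree, MulAut.conj_apply, mul_comm]

theorem exists_degree_eq_neg_one {α : MulAut H} {k : H} (h : α * φ = MulAut.conj k * φ⁻¹ * α) :
    ∃ ψ : MulAut (MappingTorus H φ), degree ψ = -1 := by
  set u := ι φ k * (t φ)⁻¹
  have hu : ∀ x, (ι φ).comp α.toMonoidHom (φ x) = u * (ι φ).comp α.toMonoidHom x * u⁻¹ := by
    intro x
    have hx := DFunLike.congr_fun h x
    simp only [MulAut.mul_apply, MulAut.conj_apply] at hx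
    simp only [MonoidHom.comp_apply, MulEquiv.coe_toMonoidHom, hx, map_mul, map_inv,
      ← t_inv_mul_ι_mul_t, u]
    group
  let F : MappingTorus H φ →* MappingTorus H φ :=
    lift ((ι φ).comp α.toMonoidHom) (zpowersHom _ u) fun m => by
      refine MonoidHom.ext fun x => ?_
      simpa [← map_zpow, MulAut.conj_apply] using
        ((ι φ).comp α.toMonoidHom).apply_zpow_apply_eq_conj hu (toAdd m) x
  have hFι : ∀ x, F (ι φ x) = ι φ (α x) := lift_inl _ _ _
  have hFt : F (t φ) = u := by simp [F]
  have hrF : ∀ x, rightHom (F x) = MulEquiv.inv _ (rightHom x) := by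
    refine DFunLike.congr_fun (hom_ext (f := rightHom.comp F)
      (g := (MulEquiv.inv _).toMonoidHom.comp rightHom) ?_ ?_)
    · ext x; simp [hFι]
    · simp [hFt, u]
  refine ⟨MulEquiv.ofBijective F (bijective_of_map_inl_of_rightHom_map F α _ hFι hrF), ?_⟩
  exact (degree_eq_iff _ _).mpr ⟨k, by simp [hFt, u]⟩

section NoSurjectionOntoInt

variable (hH : ∀ f : H →* Multiplicative ℤ, ¬ Function.Surjective f)
include hH

theorem rightHom_aut_ι (ψ : MulAut (MappingTorus H φ)) (x : H) : rightHom (ψ (ι φ x)) = 1 :=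
  DFunLike.congr_fun (MonoidHom.eq_one_of_forall_not_surjective hH
    ((rightHom.comp ψ.toMonoidHom).comp (ι φ))) x

theorem characteristic_range_ι : (ι φ).range.Characteristic := by
  refine characteristic_iff_map_le.mpr fun ψ => map_le_iff_le_comap.mpr ?_
  rintro _ ⟨x, rfl⟩
  show ψ (ι φ x) ∈ (ι φ).range
  rw [range_inl_eq_ker_rightHom]
  exact rightHom_aut_ι hH ψ x

theorem rightHom_aut (ψ : MulAut (MappingTorus H φ)) (x : MappingTorus H φ) :
    rightHom (ψ x) = rightHom (ψ (t φ)) ^ toAdd (rightHom x) := by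
  refine DFunLike.congr_fun (hom_ext (f := rightHom.comp ψ.toMonoidHom)
    (g := (zpowersHom _ (rightHom (ψ (t φ)))).comp rightHom) ?_ ?_) x
  · ext x
    simpa using rightHom_aut_ι hH ψ x
  · simp

theorem degree_mul (ψ χ : MulAut (MappingTorus H φ)) : degree (ψ * χ) = degree ψ * degree χ := by
  simp [degree, MulAut.mul_apply, rightHom_aut hH ψ (χ (t φ)), mul_comm]

variable (φ) in
def degreeHom : MulAut (MappingTorus H φ) →* ℤˣ :=
  MonoidHom.toHomUnits
    { toFun := degree
      map_one' := by simp [degree]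
      map_mul' := degree_mul hH }

variable (φ) in
def outDegree : Out (MappingTorus H φ) →* ℤˣ :=
  QuotientGroup.lift _ (degreeHom φ hH) <| by
    rintro _ ⟨g, rfl⟩
    exact Units.ext (degree_conj g)

theorem coe_outDegree_mk (ψ : MulAut (MappingTorus H φ)) :
    (outDegree φ hH (QuotientGroup.mk ψ) : ℤ) = degree ψ := rfl

theorem exists_mul_eq_conj_mul_inv_mul {ψ : MulAut (MappingTorus H φ)} (hψ : degree ψ = -1) :
    ∃ α : MulAut H, ∃ k : H, α * φ = MulAut.conj k * φ⁻¹ * α := by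
  obtain ⟨α, hα⟩ := MulAut.exists_apply_eq_of_map_range_eq (ι_injective φ) ψ
    (characteristic_iff_map_eq.mp (characteristic_range_ι hH) ψ)
  obtain ⟨k, hk⟩ := (degree_eq_iff ψ (-1)).mp hψ
  refine ⟨α, k, MulEquiv.ext fun x => ι_injective φ ?_⟩
  calc ι φ (α (φ x)) = ψ (t φ * ι φ x * (t φ)⁻¹) := by rw [t_mul_ι_mul_t_inv, hα]
    _ = ι φ k * ((t φ)⁻¹ * ι φ (α x) * t φ) * (ι φ k)⁻¹ := by
      rw [map_mul, map_mul, map_inv, hα, hk, zpow_neg_one]; group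
    _ = ι φ (MulAut.conj k (φ⁻¹ (α x))) := by
      rw [t_inv_mul_ι_mul_t, MulAut.conj_apply, map_mul, map_mul, map_inv]

theorem exists_degree_eq_neg_one_iff :
    (∃ ψ : MulAut (MappingTorus H φ), degree ψ = -1) ↔
      IsConj (QuotientGroup.mk φ : Out H) (QuotientGroup.mk φ : Out H)⁻¹ := by
  rw [← QuotientGroup.mk_inv, Out.isConj_mk_iff]
  exact ⟨fun ⟨_, hψ⟩ => exists_mul_eq_conj_mul_inv_mul hH hψ,
    fun ⟨_, _, h⟩ => exists_degree_eq_neg_one h⟩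

theorem mem_ker_outDegree_iff (x : Out (MappingTorus H φ)) :
    x ∈ (outDegree φ hH).ker ↔ ∃ ψ : MulAut (MappingTorus H φ),
      (QuotientGroup.mk ψ : Out (MappingTorus H φ)) = x ∧
      Subgroup.map ψ.toMonoidHom (ι φ).range = (ι φ).range ∧
      ∃ g : H, ψ (t φ) = ι φ g * t φ := by
  constructor
  · obtain ⟨ψ, rfl⟩ := QuotientGroup.mk_surjective x
    rw [MonoidHom.mem_ker, ← Units.val_inj, coe_outDegree_mk, Units.val_one, degree_eq_iff]
    rintro ⟨g, hg⟩
    exact ⟨ψ, rfl, characteristic_iff_map_eq.mp (characteristic_range_ι hH) ψ, g,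
      by rw [hg, zpow_one]⟩
  · rintro ⟨ψ, rfl, -, g, hg⟩
    rw [MonoidHom.mem_ker, ← Units.val_inj, coe_outDegree_mk, Units.val_one, degree_eq_iff]
    exact ⟨g, by rw [hg, zpow_one]⟩

theorem outDegree_surjective
    (hc : IsConj (QuotientGroup.mk φ : Out H) (QuotientGroup.mk φ : Out H)⁻¹) :
    Function.Surjective (outDegree φ hH) := by
  obtain ⟨ψ, hψ⟩ := (exists_degree_eq_neg_one_iff hH).mpr hc
  intro u
  rcases Int.units_eq_one_or u with rfl | rfl
  · exact ⟨1, map_one _⟩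
  · exact ⟨QuotientGroup.mk ψ, Units.ext hψ⟩

theorem outDegree_eq_one
    (hnc : ¬ IsConj (QuotientGroup.mk φ : Out H) (QuotientGroup.mk φ : Out H)⁻¹) :
    outDegree φ hH = 1 := by
  refine MonoidHom.ext fun x => ?_
  obtain ⟨ψ, rfl⟩ := QuotientGroup.mk_surjective x
  rcases Int.units_eq_one_or (outDegree φ hH ψ) with h | h
  · exact h
  · exact absurd ((exists_degree_eq_neg_one_iff hH).mp ⟨ψ, congrArg Units.val h⟩) hnc

end NoSurjectionOntoInt

end MappingTorus

theorem out0_subgroup_index_general (H : Type*) [Group H]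
    (hH : ∀ f : H →* Multiplicative ℤ, ¬ Function.Surjective f)
    (φ : MulAut H) :
    ∃ S : Subgroup (Out (MappingTorus H φ)),
      (∀ x : Out (MappingTorus H φ),
        x ∈ S ↔ ∃ ψ : MulAut (MappingTorus H φ),
          (QuotientGroup.mk ψ : Out (MappingTorus H φ)) = x ∧
          Subgroup.map ψ.toMonoidHom (MappingTorus.ι φ).range = (MappingTorus.ι φ).range ∧
          ∃ g : H, ψ (MappingTorus.t φ) = MappingTorus.ι φ g * MappingTorus.t φ) ∧
      (IsConj (QuotientGroup.mk φ : Out H) (QuotientGroup.mk φ : Out H)⁻¹ → S.index = 2) ∧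
      (¬ IsConj (QuotientGroup.mk φ : Out H) (QuotientGroup.mk φ : Out H)⁻¹ → S = ⊤) := by
  refine ⟨(MappingTorus.outDegree φ hH).ker,
    MappingTorus.mem_ker_outDegree_iff hH, fun hc => ?_, fun hnc => ?_⟩
  · rw [index_ker, MonoidHom.range_eq_top.mpr (MappingTorus.outDegree_surjective hH hc), card_top,
      Nat.card_eq_fintype_card, Fintype.card_units_int]
  · exact MonoidHom.ker_eq_top_iff.mpr (MappingTorus.outDegree_eq_one hH hnc)

theorem out0_subgroup_index (H : Type*) [Group H]
    (hZ : Subgroup.center H = ⊥)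
    (hH : ∀ f : H →* Multiplicative ℤ, ¬ Function.Surjective f)
    (φ : MulAut H) :
    ∃ S : Subgroup (Out (MappingTorus H φ)),
      (∀ x : Out (MappingTorus H φ),
        x ∈ S ↔ ∃ ψ : MulAut (MappingTorus H φ),
          (QuotientGroup.mk ψ : Out (MappingTorus H φ)) = x ∧
          Subgroup.map ψ.toMonoidHom (MappingTorus.ι φ).range = (MappingTorus.ι φ).range ∧
          ∃ g : H, ψ (MappingTorus.t φ) = MappingTorus.ι φ g * MappingTorus.t φ) ∧
      (IsConj (QuotientGroup.mk φ : Out H) (QuotientGroup.mk φ : Out H)⁻¹ → S.index = 2) ∧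
      (¬ IsConj (QuotientGroup.mk φ : Out H) (QuotientGroup.mk φ : Out H)⁻¹ → S = ⊤) :=
  out0_subgroup_index_general H hH φ
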